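/- A finite abelian unicentral group is cyclic; that is, if H is a finite abelian group with Z^∧(H) = H, then H is cyclic. -/

import Mathlib

/-!
Nonabelian tensor square modulo `q` (Conduché–Ellis / Brown–Loday for `q = 0`),
presented by generators `g ⊗ h` and `{(g,g)}` with the defining relations.
-/

namespace QTensor

/-- Generators of the `q`-tensor square: `t g h` stands for `g ⊗ h`,
and `d g` stands for the symbol `{(g,g)}`. -/
inductive Gen (G : Type) : Type
  | t : G → G → Gen G
  | d : G → Gen G

variable (G : Type) [Group G]

/-- The word `g ⊗ h` in the free group on the generators. -/
def T (g h : G) : FreeGroup (Gen G) := FreeGroup.of (Gen.t g h)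

/-- The word `{(g,g)}` in the free group on the generators. -/
def D (g : G) : FreeGroup (Gen G) := FreeGroup.of (Gen.d g)

/-- The word `∏_{i=1}^{q-1} (g⁻¹ ⊗ (^(g^(1-q+i)) g₁)^i)` appearing in relation (4). -/
def relProd (q : ℕ) (g g₁ : G) : FreeGroup (Gen G) :=
  ((List.range (q - 1)).map (fun j =>
    T G g⁻¹ ((g ^ ((1 : ℤ) - (q : ℤ) + (j + 1 : ℕ)) * g₁ *
      (g ^ ((1 : ℤ) - (q : ℤ) + (j + 1 : ℕ)))⁻¹) ^ (j + 1)))).prod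

/-- The defining relations of the `q`-tensor square.  For `q = 0` the symbols
`{(g,g)}` are killed, so that the group is the Brown–Loday nonabelian tensor
square generated by the `g ⊗ h` subject to relations (1) and (2). -/
def rels (q : ℕ) : Set (FreeGroup (Gen G)) :=
  {r | ∃ g g₁ h : G,
      r = T G (g * g₁) h * (T G (g * g₁ * g⁻¹) (g * h * g⁻¹) * T G g h)⁻¹} ∪
  {r | ∃ g h h₁ : G,
      r = T G g (h * h₁) * (T G g h * T G (h * g * h⁻¹) (h * h₁ * h⁻¹))⁻¹} ∪
  {r | ∃ g g₁ h₁ : G,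
      r = D G g * T G g₁ h₁ * (D G g)⁻¹ *
        (T G (g ^ q * g₁ * (g ^ q)⁻¹) (g ^ q * h₁ * (g ^ q)⁻¹))⁻¹} ∪
  {r | ∃ g g₁ : G,
      r = D G (g * g₁) * (D G g * relProd G q g g₁ * D G g₁)⁻¹} ∪
  {r | ∃ g g₁ : G,
      r = D G g * D G g₁ * (D G g)⁻¹ * (D G g₁)⁻¹ * (T G (g ^ q) (g₁ ^ q))⁻¹} ∪
  {r | ∃ g h : G,
      r = D G (g * h * g⁻¹ * h⁻¹) * ((T G g h) ^ q)⁻¹} ∪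
  {r | q = 0 ∧ ∃ g : G, r = D G g}

/-- The nonabelian tensor square modulo `q`, `G ⊗^q G`. -/
def tensorSquare (q : ℕ) : Type := PresentedGroup (rels G q)

instance (q : ℕ) : Group (tensorSquare G q) := by unfold tensorSquare; infer_instance

/-- The element `g ⊗ h` of `G ⊗^q G`. -/
def tmk (q : ℕ) (g h : G) : tensorSquare G q := PresentedGroup.of (Gen.t g h)

/-- The element `{(g,g)}` of `G ⊗^q G`. -/
def dmk (q : ℕ) (g : G) : tensorSquare G q := PresentedGroup.of (Gen.d g)

/-- `∇^q(G)`, the normal closure of the elements `g ⊗ g` in `G ⊗^q G`. -/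
def nabla (q : ℕ) : Subgroup (tensorSquare G q) :=
  Subgroup.normalClosure {x | ∃ g : G, x = tmk G q g g}

instance (q : ℕ) : (nabla G q).Normal := Subgroup.normalClosure_normal

/-- The exterior square modulo `q`, `G ∧^q G = (G ⊗^q G)/∇^q(G)`. -/
def extSquare (q : ℕ) : Type := tensorSquare G q ⧸ nabla G q

instance (q : ℕ) : Group (extSquare G q) := by unfold extSquare; infer_instance

/-- The element `g ∧ h` of `G ∧^q G`. -/
def wmk (q : ℕ) (g h : G) : extSquare G q := QuotientGroup.mk (tmk G q g h)

/-- The image of the symbol `{(g,g)}` in `G ∧^q G`. -/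
def dwmk (q : ℕ) (g : G) : extSquare G q := QuotientGroup.mk (dmk G q g)

/-- The exterior centre variant `Z^∧_q(G) = {g : g ∧ h = 1 for all h}` (as a set). -/
def Zext (q : ℕ) : Set G := {g | ∀ h : G, wmk G q g h = 1}

/-- `E^∧_q(G) = {g ∈ Z^∧_q(G) : {(g,g)} = 1 in G ∧^q G}` (as a set); for `q = 0`
the second condition is automatic, so `E^∧_0(G) = Z^∧(G)`. -/
def Eext (q : ℕ) : Set G := {g | (∀ h : G, wmk G q g h = 1) ∧ dwmk G q g = 1}

/-- The subgroup `G^q[G,G]` generated by all `q`-th powers and all commutators. -/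
def qPowComm (q : ℕ) : Subgroup G :=
  Subgroup.closure ({x | ∃ g : G, x = g ^ q} ∪ {x | ∃ a b : G, x = a * b * a⁻¹ * b⁻¹})

theorem pow_mem_qPowComm (q : ℕ) (g : G) : g ^ q ∈ qPowComm G q :=
  Subgroup.subset_closure (Or.inl ⟨g, rfl⟩)

theorem commutator_mem_qPowComm (q : ℕ) (a b : G) :
    a * b * a⁻¹ * b⁻¹ ∈ qPowComm G q :=
  Subgroup.subset_closure (Or.inr ⟨a, b, rfl⟩)

open scoped commutatorElement in
theorem mem_commutator (a b : G) : ⁅a, b⁆ ∈ commutator G :=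
  Subgroup.commutator_mem_commutator (Subgroup.mem_top a) (Subgroup.mem_top b)

/-- `M₀^q(G)`: the subgroup of `G ∧^q G` generated by the `x ∧ y` with `[x,y] = 1`.
(It is contained in the `q`-Schur multiplier `M^q(G)`.) -/
def M0 (q : ℕ) : Subgroup (extSquare G q) :=
  Subgroup.closure {x | ∃ a b : G, a * b = b * a ∧ x = wmk G q a b}

/-- `M̂₀^q(G)`: the subgroup of `G ∧^q G` generated by the `x ∧ y` with `[x,y] = 1`
together with the `{(g,g)}` with `g^q = 1`. -/
def M0hat (q : ℕ) : Subgroup (extSquare G q) :=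
  Subgroup.closure
    ({x | ∃ a b : G, a * b = b * a ∧ x = wmk G q a b} ∪
     {x | ∃ g : G, g ^ q = 1 ∧ x = dwmk G q g})

/-- A group `Q` is capable if `Q ≅ E/Z(E)` for some group `E`. -/
def Capable (Q : Type) [Group Q] : Prop :=
  ∃ (E : Type) (_ : Group E), Nonempty (Q ≃* E ⧸ Subgroup.center E)

end QTensor

/-!
An alternating biadditive pairing `φ` on an abelian group `H` respects the defining relations
of `H ∧ H`, so it factors through the exterior square and vanishes on every pair `a, b` with
`a ∧ b = 1`. If `H` is finite but not cyclic, two of its invariant factors share a prime `p`,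
so `H` surjects onto `(ℤ/p)²`; the pullback of the determinant is such a pairing, and it takes
the value `1` on preimages of the standard basis.
-/

open Function

theorem isAddCyclic_pi_zmod_of_pairwise_coprime {ι : Type} [Fintype ι] {n : ι → ℕ}
    (hn : Pairwise (Nat.Coprime on n)) :
    IsAddCyclic (∀ i, ZMod (n i)) :=
  isAddCyclic_of_surjective (ZMod.prodEquivPi n hn) (ZMod.prodEquivPi n hn).surjective

theorem exists_surjective_pi_zmod_prod {ι : Type} [DecidableEq ι] {n : ι → ℕ} {i j : ι}
    (hij : i ≠ j) {p : ℕ} (hi : p ∣ n i) (hj : p ∣ n j) :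
    ∃ F : (∀ k, ZMod (n k)) →+ ZMod p × ZMod p, Surjective F := by
  refine ⟨((ZMod.castHom hi (ZMod p)).toAddMonoidHom.comp (Pi.evalAddMonoidHom _ i)).prod
    ((ZMod.castHom hj (ZMod p)).toAddMonoidHom.comp (Pi.evalAddMonoidHom _ j)), ?_⟩
  rintro ⟨u, v⟩
  obtain ⟨u', rfl⟩ := ZMod.ringHom_surjective (ZMod.castHom hi (ZMod p)) u
  obtain ⟨v', rfl⟩ := ZMod.ringHom_surjective (ZMod.castHom hj (ZMod p)) v
  refine ⟨Pi.single i u' + Pi.single j v', ?_⟩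
  simp [Pi.single_eq_of_ne hij, Pi.single_eq_of_ne hij.symm]

theorem exists_surjective_zmod_prod_of_not_isCyclic {H : Type} [CommGroup H] [Finite H]
    (hH : ¬IsCyclic H) :
    ∃ p, p.Prime ∧ ∃ F : H →* Multiplicative (ZMod p × ZMod p), Surjective F := by
  classical
  obtain ⟨ι, _, n, -, ⟨e⟩⟩ := CommGroup.equiv_prod_multiplicative_zmod_of_finite H
  let e' : H ≃* Multiplicative (∀ i, ZMod (n i)) := e.trans (MulEquiv.piMultiplicative _).symm
  obtain ⟨i, j, hij, hn⟩ : ∃ i j, i ≠ j ∧ ¬(n i).Coprime (n j) := by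
    by_contra! hn
    exact hH <| e'.isCyclic.2 <|
      isCyclic_multiplicative_iff.2 (isAddCyclic_pi_zmod_of_pairwise_coprime hn)
  obtain ⟨p, hp, hi, hj⟩ := Nat.Prime.not_coprime_iff_dvd.1 hn
  obtain ⟨F, hF⟩ := exists_surjective_pi_zmod_prod hij hi hj
  exact ⟨p, hp, F.toMultiplicative.comp e'.toMonoidHom, hF.comp e'.surjective⟩

namespace QTensor

variable {H : Type} [CommGroup H] {A : Type} [AddCommGroup A] (φ : H → H → A)
  (hl : ∀ x y z, φ (x * y) z = φ x z + φ y z) (hr : ∀ x y z, φ x (y * z) = φ x y + φ x z)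

def pairingOnGen : Gen H → Multiplicative A
  | .t x y => .ofAdd (φ x y)
  | .d _ => 1

include hl hr in
theorem lift_pairingOnGen_rels : ∀ r ∈ rels H 0, FreeGroup.lift (pairingOnGen φ) r = 1 := by
  have hT (x y : H) : FreeGroup.lift (pairingOnGen φ) (T H x y) = .ofAdd (φ x y) :=
    FreeGroup.lift_apply_of
  have hD (x : H) : FreeGroup.lift (pairingOnGen φ) (D H x) = 1 := FreeGroup.lift_apply_of
  have hconj (x y : H) : x * y * x⁻¹ = y := mul_inv_cancel_comm x y
  have hφ1 : φ 1 1 = 0 := by simpa using hl 1 1 1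
  rintro r ((((((⟨g, g₁, h, rfl⟩ | ⟨g, h, h₁, rfl⟩) | ⟨g, g₁, h₁, rfl⟩) | ⟨g, g₁, rfl⟩) |
    ⟨g, g₁, rfl⟩) | ⟨g, h, rfl⟩) | ⟨-, g, rfl⟩)
  all_goals apply Multiplicative.toAdd.injective
  · simp [hT, hconj, hl]
    abel
  all_goals simp [relProd, hT, hD, hconj, hr, hφ1]

def tensorSquareLift : tensorSquare H 0 →* Multiplicative A :=
  PresentedGroup.toGroup (lift_pairingOnGen_rels φ hl hr)

theorem tensorSquareLift_tmk (a b : H) :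
    tensorSquareLift φ hl hr (tmk H 0 a b) = .ofAdd (φ a b) :=
  PresentedGroup.toGroup.of _

def extSquareLift (halt : ∀ x, φ x x = 0) : extSquare H 0 →* Multiplicative A :=
  QuotientGroup.lift (nabla H 0) (tensorSquareLift φ hl hr) <|
    Subgroup.normalClosure_le_normal <| by
      rintro _ ⟨g, rfl⟩
      simpa [tensorSquareLift_tmk] using halt g

theorem extSquareLift_wmk (halt : ∀ x, φ x x = 0) (a b : H) :
    extSquareLift φ hl hr halt (wmk H 0 a b) = .ofAdd (φ a b) :=
  tensorSquareLift_tmk φ hl hr a b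

include hl hr in
theorem pairing_eq_zero_of_wmk_eq_one (halt : ∀ x, φ x x = 0) {a b : H}
    (hab : wmk H 0 a b = 1) : φ a b = 0 := by
  simpa [hab] using (extSquareLift_wmk φ hl hr halt a b).symm

theorem det_eq_of_wmk_eq_one {R : Type} [CommRing R]
    (F : H →* Multiplicative (R × R)) {a b : H} (hab : wmk H 0 a b = 1) :
    (F a).toAdd.1 * (F b).toAdd.2 = (F b).toAdd.1 * (F a).toAdd.2 := by
  refine sub_eq_zero.1 <| pairing_eq_zero_of_wmk_eq_one
    (fun x y ↦ (F x).toAdd.1 * (F y).toAdd.2 - (F y).toAdd.1 * (F x).toAdd.2) ?_ ?_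
    (fun _ ↦ sub_self _) hab
  all_goals intro x y z; simp only [map_mul, toAdd_mul, Prod.fst_add, Prod.snd_add]; ring

end QTensor

open QTensor in
/-- A finite abelian unicentral group (i.e. `Z^∧(H) = H`) is cyclic. -/
theorem isCyclic_of_unicentral (H : Type) [CommGroup H] [Finite H]
    (h : ∀ g : H, g ∈ Zext H 0) : IsCyclic H := by
  by_contra hH
  obtain ⟨p, hp, F, hF⟩ := exists_surjective_zmod_prod_of_not_isCyclic hH
  have : Fact p.Prime := ⟨hp⟩
  obtain ⟨a, ha⟩ := hF (.ofAdd (1, 0))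
  obtain ⟨b, hb⟩ := hF (.ofAdd (0, 1))
  simpa [ha, hb] using det_eq_of_wmk_eq_one F (h a b)
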